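/- arXiv:2211.13631 — 5 statements merged into one kernel-verified Lean document; each statement's English description precedes it below -/
import Mathlib

section
/- Let G be a finite group such that every element g ∈ G is conjugate to its square g². Then G is the trivial group. -/
/-! Let `p` be the least prime factor of `|G|`, let `g` have order `p`, and let `x g x⁻¹ = g²`.
Then `x^k g x^{-k} = g^(2^k)`, so `2 ^ orderOf x ≡ 1 (mod p)`. The multiplicative order of `2`
modulo `p` is then a divisor `d > 1` of `p - 1` dividing `orderOf x`, hence `|G|`, and the least
prime factor of `d` is a prime factor of `|G|` smaller than `p`. -/

theorem conj_pow_eq_pow_pow_of_conj_eq_pow {G : Type*} [Group G] {x g : G} {n : ℕ}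
    (hx : x * g * x⁻¹ = g ^ n) (k : ℕ) : x ^ k * g * (x ^ k)⁻¹ = g ^ n ^ k := by
  induction k with
  | zero => simp
  | succ k ih =>
    calc x ^ (k + 1) * g * (x ^ (k + 1))⁻¹ = x * (x ^ k * g * (x ^ k)⁻¹) * x⁻¹ := by group
      _ = (x * g * x⁻¹) ^ n ^ k := by rw [ih, conj_pow]
      _ = g ^ n ^ (k + 1) := by rw [hx, ← pow_mul, pow_succ']

theorem natCast_pow_orderOf_eq_one_of_conj_eq_pow {G : Type*} [Group G] {x g : G} {n : ℕ}
    (hx : x * g * x⁻¹ = g ^ n) : (n : ZMod (orderOf g)) ^ orderOf x = 1 := by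
  have hg : g ^ n ^ orderOf x = g ^ 1 := by
    rw [← conj_pow_eq_pow_pow_of_conj_eq_pow hx, pow_orderOf_eq_one]
    group
  exact_mod_cast (ZMod.natCast_eq_natCast_iff _ _ _).mpr (pow_eq_pow_iff_modEq.mp hg)

theorem ZMod.exists_prime_lt_dvd_of_pow_eq_one {p : ℕ} [hp : Fact p.Prime] {a : ZMod p}
    (ha : a ≠ 1) {m : ℕ} (hm : m ≠ 0) (ham : a ^ m = 1) : ∃ q, q.Prime ∧ q < p ∧ q ∣ m := by
  have ha₀ : a ≠ 0 := by
    rintro rfl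
    simp [zero_pow hm] at ham
  have hdvd_m : orderOf a ∣ m := orderOf_dvd_of_pow_eq_one ham
  have hdvd_sub : orderOf a ∣ p - 1 := ZMod.orderOf_dvd_card_sub_one ha₀
  have hpos : 0 < orderOf a := Nat.pos_of_dvd_of_pos hdvd_m (Nat.pos_of_ne_zero hm)
  have hle : orderOf a ≤ p - 1 := Nat.le_of_dvd (by have := hp.out.two_le; omega) hdvd_sub
  have hne_one : orderOf a ≠ 1 := fun h => ha (orderOf_eq_one_iff.mp h)
  refine ⟨(orderOf a).minFac, Nat.minFac_prime hne_one, ?_, (Nat.minFac_dvd _).trans hdvd_m⟩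
  have := Nat.minFac_le hpos
  omega

/-- If every element of a finite group is conjugate to its square, the group is trivial. -/
theorem every_elt_conj_to_square_implies_trivial
    (G : Type*) [Group G] [Finite G]
    (h : ∀ g : G, IsConj g (g ^ 2)) :
    ∀ g : G, g = 1 := by
  intro g₀
  by_contra hg₀
  have : Nontrivial G := ⟨g₀, 1, hg₀⟩
  set p := (Nat.card G).minFac
  have : Fact p.Prime := ⟨Nat.minFac_prime Finite.one_lt_card.ne'⟩
  obtain ⟨g, hg⟩ := exists_prime_orderOf_dvd_card' p (Nat.minFac_dvd _)
  obtain ⟨x, hx⟩ := isConj_iff.mp (h g)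
  have h2 : (2 : ZMod p) ^ orderOf x = 1 := by
    have := natCast_pow_orderOf_eq_one_of_conj_eq_pow hx
    rw [hg] at this
    exact_mod_cast this
  have two_ne_one : (2 : ZMod p) ≠ 1 := fun h21 => one_ne_zero (by linear_combination h21)
  obtain ⟨q, hq, hqp, hqx⟩ :=
    ZMod.exists_prime_lt_dvd_of_pow_eq_one two_ne_one (orderOf_pos x).ne' h2
  exact hqp.not_ge (Nat.minFac_le_of_dvd hq.two_le (hqx.trans (orderOf_dvd_natCard x)))
end

section
/- Let p ≥ 5 be a prime and let H be a subgroup of the multiplicative group (ℤ/pℤ)×/{±1} which, identified with a set of odd residues, equals {1, 3, 5, …, j} (classes of all odd numbers from 1 to j) for some odd j with 3 ≤ j ≤ p-2. Then H is the whole group, i.e., j = p-2. -/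
/-!
Multiplying by `3 ∈ H` shows that for every odd `t ≤ j`, `3t` is congruent to `±t'` modulo `p`
for some odd `t' ≤ j`. If `j ≤ p - 4`, take the odd `t` with `j < 3t ≤ j + 6`. Reduced modulo
`p`, `3t` becomes either the odd number `3t` itself, lying in `(j, p)`, or one of `0, 2`; none of
these is `±t'` with `t'` odd and `t' ≤ j`, since parity forbids `3t + t' = p`.
-/

theorem QuotientGroup.eq_or_eq_neg_of_mk_eq_mk {G : Type*} [Group G] [HasDistribNeg G] {a b : G}
    (h : (a : G ⧸ Subgroup.zpowers (-1 : G)) = b) : b = a ∨ b = -a := by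
  obtain ⟨k, hk⟩ := Subgroup.mem_zpowers_iff.mp (QuotientGroup.eq.mp h)
  rw [neg_one_zpow_eq_ite, eq_inv_mul_iff_mul_eq] at hk
  split_ifs at hk <;> simp [← hk]

theorem ZMod.eq_or_add_eq_of_natCast_eq_or_eq_neg {p a b : ℕ} (ha : a < p) (hb : b < p)
    (h : (a : ZMod p) = b ∨ (a : ZMod p) = -b) : a = b ∨ a + b = p := by
  rcases h with h | h
  · rw [ZMod.natCast_eq_natCast_iff', Nat.mod_eq_of_lt ha, Nat.mod_eq_of_lt hb] at h
    exact .inl h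
  · rw [eq_neg_iff_add_eq_zero, ← Nat.cast_add, ZMod.natCast_eq_zero_iff] at h
    obtain ⟨k, hk⟩ := h
    rcases k with _ | _ | k
    · omega
    · omega
    · nlinarith

theorem ZMod.exists_unit_coe_eq_natCast {p t : ℕ} (hp : p.Prime) (ht0 : 0 < t) (htp : t < p) :
    ∃ u : (ZMod p)ˣ, (u : ZMod p) = t :=
  ⟨ZMod.unitOfCoprime t ((hp.coprime_iff_not_dvd.2 (Nat.not_dvd_of_pos_of_lt ht0 htp)).symm),
    ZMod.coe_unitOfCoprime _ _⟩

theorem not_natCast_eq_or_eq_neg_of_odd {p j n t : ℕ} (hp : Odd p) (hjp : j + 4 ≤ p)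
    (hn : Odd n) (hjn : j < n) (hnj : n ≤ j + 6) (ht : Odd t) (htj : t ≤ j) :
    ¬((n : ZMod p) = t ∨ (n : ZMod p) = -t) := by
  intro h
  obtain ⟨p, rfl⟩ := hp
  obtain ⟨n, rfl⟩ := hn
  obtain ⟨t, rfl⟩ := ht
  rcases lt_or_ge (2 * n + 1) (2 * p + 1) with hlt | hge
  · have := ZMod.eq_or_add_eq_of_natCast_eq_or_eq_neg hlt (by omega) h
    omega
  · obtain ⟨r, hr⟩ := Nat.exists_eq_add_of_le hge
    rw [hr, Nat.cast_add, ZMod.natCast_self, zero_add] at h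
    have := ZMod.eq_or_add_eq_of_natCast_eq_or_eq_neg (by omega) (by omega) h
    omega

theorem exists_odd_le_eq_three_mul_or_eq_neg {p j : ℕ} (hp : p.Prime) (hj3 : 3 ≤ j) (hjp : j < p)
    {H : Subgroup ((ZMod p)ˣ ⧸ Subgroup.zpowers (-1 : (ZMod p)ˣ))}
    (hH : ∀ x, x ∈ H ↔ ∃ t : ℕ, Odd t ∧ 1 ≤ t ∧ t ≤ j ∧
      ∃ u : (ZMod p)ˣ, ((u : ZMod p) = (t : ZMod p)) ∧ x = QuotientGroup.mk u)
    {t : ℕ} (ht : Odd t) (htj : t ≤ j) :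
    ∃ t' : ℕ, Odd t' ∧ t' ≤ j ∧ (((3 * t : ℕ) : ZMod p) = t' ∨ ((3 * t : ℕ) : ZMod p) = -t') := by
  have mk_mem : ∀ s : ℕ, Odd s → s ≤ j → ∃ u : (ZMod p)ˣ, (u : ZMod p) = s ∧ (u : _ ⧸ _) ∈ H :=
    fun s hs hsj ↦
      have ⟨u, hu⟩ := ZMod.exists_unit_coe_eq_natCast hp hs.pos (by omega)
      ⟨u, hu, (hH _).2 ⟨s, hs, hs.pos, hsj, u, hu, rfl⟩⟩
  obtain ⟨u₃, hu₃, h₃⟩ := mk_mem 3 (by decide) hj3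
  obtain ⟨u, hu, hmem⟩ := mk_mem t ht htj
  obtain ⟨t', ht', -, ht'j, u', hu', hmk⟩ := (hH _).1 (H.mul_mem h₃ hmem)
  refine ⟨t', ht', ht'j, ?_⟩
  rw [← QuotientGroup.mk_mul] at hmk
  rcases QuotientGroup.eq_or_eq_neg_of_mk_eq_mk hmk with h | h
  · left; rw [← hu', h, Units.val_mul, hu₃, hu, Nat.cast_mul]
  · right; rw [← hu', h, Units.val_neg, Units.val_mul, hu₃, hu, Nat.cast_mul, neg_neg]

theorem subgroup_of_odd_residues_general (p : ℕ) (hp : p.Prime)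
    (j : ℕ) (hjodd : Odd j) (hj3 : 3 ≤ j) (hjp : j ≤ p - 2)
    (H : Subgroup ((ZMod p)ˣ ⧸ Subgroup.zpowers (-1 : (ZMod p)ˣ)))
    (hH : ∀ x, x ∈ H ↔ ∃ t : ℕ, Odd t ∧ 1 ≤ t ∧ t ≤ j ∧
      ∃ u : (ZMod p)ˣ, ((u : ZMod p) = (t : ZMod p)) ∧ x = QuotientGroup.mk u) :
    j = p - 2 := by
  have hpodd : Odd p := hp.odd_of_ne_two (by omega)
  by_contra hne
  have hjp4 : j + 4 ≤ p := by
    obtain ⟨a, rfl⟩ := hpodd; obtain ⟨b, rfl⟩ := hjodd; omega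
  -- `3 * t` is the least odd multiple of 3 exceeding `j`
  set t := 2 * ((j + 3) / 6) + 1
  obtain ⟨t', ht', ht'j, h⟩ :=
    exists_odd_le_eq_three_mul_or_eq_neg hp hj3 (by omega) hH (t := t) ⟨_, rfl⟩ (by omega)
  exact not_natCast_eq_or_eq_neg_of_odd hpodd hjp4 ((by decide : Odd 3).mul ⟨_, rfl⟩)
    (by omega) (by omega) ht' ht'j h

/-- If a subgroup of `(ℤ/pℤ)ˣ/{±1}` consists exactly of the classes of the odd
numbers `1, 3, …, j` for some odd `3 ≤ j ≤ p-2`, then `j = p - 2`. -/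
theorem subgroup_of_odd_residues (p : ℕ) (hp : p.Prime) (hp5 : 5 ≤ p)
    (j : ℕ) (hjodd : Odd j) (hj3 : 3 ≤ j) (hjp : j ≤ p - 2)
    (H : Subgroup ((ZMod p)ˣ ⧸ Subgroup.zpowers (-1 : (ZMod p)ˣ)))
    (hH : ∀ x, x ∈ H ↔ ∃ t : ℕ, Odd t ∧ 1 ≤ t ∧ t ≤ j ∧
      ∃ u : (ZMod p)ˣ, ((u : ZMod p) = (t : ZMod p)) ∧ x = QuotientGroup.mk u) :
    j = p - 2 :=
  subgroup_of_odd_residues_general p hp j hjodd hj3 hjp H hH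
end

section
/- Let R be a commutative ring free as a ℤ-module with basis 1, X, Y, Z and multiplication X² = pX + lY + cZ, Y² = 1 + kX + eY + kZ, Z² = cX + lY + pZ, XY = qX + kY + lZ, YZ = lX + kY + qZ, XZ = 1 + pX + qY + pZ, where c,e,k,l,p,q are non-negative integers satisfying kl + lc = lp + kq, kp + le + kc = 2lq + k², l² + c² = 1 + q² + p², and l² + k² + q² = 1 + 2pk + qe. Suppose k = e = 0 and q = 1. Then there are no such non-negative integers (the constraints are contradictory). -/
/-! Once `k = e = 0` and `q = 1`, the last constraint forces `l = 0`, and the third becomes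
`c² = p² + 2`; but squares are `0` or `1` modulo `4`, so `p² + 2` never is one. -/

theorem Nat.sq_ne_sq_add_two (c p : ℕ) : c ^ 2 ≠ p ^ 2 + 2 := by
  intro h
  have hmod : (c : ZMod 4) ^ 2 = (p : ZMod 4) ^ 2 + 2 := by
    exact_mod_cast congrArg (Nat.cast : ℕ → ZMod 4) h
  generalize (c : ZMod 4) = x at hmod
  generalize (p : ZMod 4) = y at hmod
  revert x y
  decide

/-- In the rank-4 based rings `K(c,e,k,l,p,q)`, the case `k = e = 0`, `q = 1` is
impossible: no non-negative integers satisfy the defining constraints. -/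
theorem rank_four_no_solutions :
    ¬ ∃ c e k l p q : ℕ,
      k = 0 ∧ e = 0 ∧ q = 1 ∧
      k * l + l * c = l * p + k * q ∧
      k * p + l * e + k * c = 2 * l * q + k ^ 2 ∧
      l ^ 2 + c ^ 2 = 1 + q ^ 2 + p ^ 2 ∧
      l ^ 2 + k ^ 2 + q ^ 2 = 1 + 2 * p * k + q * e := by
  rintro ⟨c, e, k, l, p, q, rfl, rfl, rfl, -, -, hsq, hl⟩
  obtain rfl : l = 0 := by simpa using hl
  exact Nat.sq_ne_sq_add_two c p (by omega)
end

section
/- Let c,e,k,l,p,q be non-negative integers satisfying l² + c² = 1 + q² + p² and l² + k² + q² = 1 + 2pk + qe, with q = 0 and l = 0 and suppose the positive real Frobenius–Perron dimension d of X satisfies d² = 1 + 2pd and d = k. Then k = c = 1, p = 0, and furthermore if the positive integer b satisfies b² = eb + 3 then e = 2 and b = 3. -/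
/-!
With `q = l = 0` the two equations read `c² = 1 + p²` and `k² = 2pk + 1`. In the second, `k`
divides `k²` and `2pk`, hence `1`, so `k = 1`; then `1 = 2p + 1` gives `p = 0` and the first
becomes `c² = 1`. Likewise `b² = eb + 3` forces `b ∣ 3`, and `b = 1` is impossible, so `b = 3`
and `e = 2`.
-/

namespace Nat

theorem dvd_of_sq_eq_mul_add {b e n : ℕ} (h : b ^ 2 = e * b + n) : b ∣ n :=
  (Nat.dvd_add_right (dvd_mul_left b e)).mp (h ▸ dvd_pow_self b two_ne_zero)

theorem eq_one_of_sq_eq_mul_add_one {k a : ℕ} (h : k ^ 2 = a * k + 1) : k = 1 :=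
  Nat.dvd_one.mp (dvd_of_sq_eq_mul_add h)

theorem eq_two_and_eq_three_of_sq_eq_mul_add_three {b e : ℕ} (h : b ^ 2 = e * b + 3) :
    e = 2 ∧ b = 3 := by
  rcases (Nat.dvd_prime Nat.prime_three).mp (dvd_of_sq_eq_mul_add h) with rfl | rfl <;> omega

end Nat

theorem rank_four_case_two_general (c e k l p q : ℕ)
    (h3 : l ^ 2 + c ^ 2 = 1 + q ^ 2 + p ^ 2)
    (h4 : l ^ 2 + k ^ 2 + q ^ 2 = 1 + 2 * p * k + q * e)
    (hq : q = 0) (hl : l = 0) :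
    k = 1 ∧ c = 1 ∧ p = 0 ∧
      ∀ b : ℕ, 0 < b → b ^ 2 = e * b + 3 → e = 2 ∧ b = 3 := by
  subst hq hl
  have hk : k = 1 := Nat.eq_one_of_sq_eq_mul_add_one (a := 2 * p) (by linarith)
  subst hk
  have hp : p = 0 := by omega
  subst hp
  have hc : c = 1 := by simpa using h3
  exact ⟨rfl, hc, rfl, fun b _ hb => Nat.eq_two_and_eq_three_of_sq_eq_mul_add_three hb⟩

/-- Arithmetic core of the rank-4 classification, Case 2. -/
theorem rank_four_case_two (c e k l p q : ℕ)
    (h3 : l ^ 2 + c ^ 2 = 1 + q ^ 2 + p ^ 2)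
    (h4 : l ^ 2 + k ^ 2 + q ^ 2 = 1 + 2 * p * k + q * e)
    (hq : q = 0) (hl : l = 0)
    (d : ℝ) (hd : 0 < d) (hdeq : d ^ 2 = 1 + 2 * (p : ℝ) * d) (hdk : d = (k : ℝ)) :
    k = 1 ∧ c = 1 ∧ p = 0 ∧
      ∀ b : ℕ, 0 < b → b ^ 2 = e * b + 3 → e = 2 ∧ b = 3 :=
  rank_four_case_two_general c e k l p q h3 h4 hq hl
end

section
/- Let R be a commutative ring with ℤ-basis 1, X, Y where X² = 1 + mX + kY, Y² = 1 + lX + nY, XY = kX + lY for non-negative integers k,l,m,n with k² + l² = kn + lm + 1. Suppose ψ : R → R is a ring homomorphism with ψ(X) = ε₁·1 and ψ(Y) = ε₂·1 where ε₁, ε₂ ∈ {1, -1}. Then m = k, l = n, ε₁ε₂ = -1, and l = k + 1 or k = l + 1. -/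
/-!
A ring with a `ℤ`-basis has characteristic zero, so applying `ψ` to the three structure relations
gives the same relations among the integers `ε₁, ε₂`. As `ε₁² = ε₂² = 1`, they say
`m ε₁ + k ε₂ = 0 = l ε₁ + n ε₂` and `ε₁ ε₂ = k ε₁ + l ε₂`. If `ε₁ = ε₂`, nonnegativity forces
`k = l = m = n = 0` and the last relation reads `1 = 0`; hence `ε₁ = -ε₂`, which gives `m = k`,
`l = n`, and `k - l = ±1`.
-/

theorem Module.Basis.charZero {ι R : Type*} [Nonempty ι] [Ring R] (B : Module.Basis ι ℤ R) :
    CharZero R :=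
  have := B.isTorsionFree
  have := Module.isTorsionFree_int_iff_isAddTorsionFree.mp this
  have := nontrivial_of_ne _ _ (B.ne_zero (Classical.arbitrary ι))
  CharZero.of_isAddTorsionFree R R

theorem RingHom.int_relation_of_map_eq_intCast {R S : Type*} [Ring R] [Ring S] [CharZero S]
    (ψ : R →+* S) {X Y U V : R} {x y u v a b c : ℤ} (hX : ψ X = x) (hY : ψ Y = y)
    (hU : ψ U = u) (hV : ψ V = v) (h : U * V = c + a • X + b • Y) :
    u * v = c + a * x + b * y :=
  Int.cast_injective (α := S) <| by
    simpa only [map_mul, map_add, map_intCast, map_zsmul, hX, hY, hU, hV, zsmul_eq_mul,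
      Int.cast_mul, Int.cast_add] using congrArg ψ h

theorem structure_constants_of_sign_relations {k l m n : ℕ} {ε₁ ε₂ : ℤ}
    (hε₁ : ε₁ = 1 ∨ ε₁ = -1) (hε₂ : ε₂ = 1 ∨ ε₂ = -1)
    (hXX : ε₁ * ε₁ = 1 + m * ε₁ + k * ε₂) (hYY : ε₂ * ε₂ = 1 + l * ε₁ + n * ε₂)
    (hXY : ε₁ * ε₂ = 0 + k * ε₁ + l * ε₂) :
    m = k ∧ l = n ∧ ε₁ * ε₂ = -1 ∧ (l = k + 1 ∨ k = l + 1) := by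
  rcases hε₁ with rfl | rfl <;> rcases hε₂ with rfl | rfl <;> omega

theorem rank_three_trivial_image_general
    (R : Type*) [CommRing R] (X Y : R)
    (B : Module.Basis (Fin 3) ℤ R)
    (k l m n : ℕ)
    (hX2 : X * X = 1 + (m : ℤ) • X + (k : ℤ) • Y)
    (hY2 : Y * Y = 1 + (l : ℤ) • X + (n : ℤ) • Y)
    (hXY : X * Y = (k : ℤ) • X + (l : ℤ) • Y)
    (ψ : R →+* R) (ε₁ ε₂ : ℤ)
    (hε₁ : ε₁ = 1 ∨ ε₁ = -1) (hε₂ : ε₂ = 1 ∨ ε₂ = -1)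
    (hψX : ψ X = ε₁ • (1 : R)) (hψY : ψ Y = ε₂ • (1 : R)) :
    m = k ∧ l = n ∧ ε₁ * ε₂ = -1 ∧ (l = k + 1 ∨ k = l + 1) := by
  have := B.charZero
  rw [zsmul_one] at hψX hψY
  exact structure_constants_of_sign_relations hε₁ hε₂
    (ψ.int_relation_of_map_eq_intCast hψX hψY hψX hψX (by rw [hX2, Int.cast_one]))
    (ψ.int_relation_of_map_eq_intCast hψX hψY hψY hψY (by rw [hY2, Int.cast_one]))
    (ψ.int_relation_of_map_eq_intCast hψX hψY hψX hψY (by rw [hXY, Int.cast_zero, zero_add]))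

/-- The 'trivial image' case in the rank-3 classification. -/
theorem rank_three_trivial_image
    (R : Type*) [CommRing R] (X Y : R)
    (B : Module.Basis (Fin 3) ℤ R) (hB0 : B 0 = 1) (hB1 : B 1 = X) (hB2 : B 2 = Y)
    (k l m n : ℕ) (hbased : k ^ 2 + l ^ 2 = k * n + l * m + 1)
    (hX2 : X * X = 1 + (m : ℤ) • X + (k : ℤ) • Y)
    (hY2 : Y * Y = 1 + (l : ℤ) • X + (n : ℤ) • Y)
    (hXY : X * Y = (k : ℤ) • X + (l : ℤ) • Y)
    (ψ : R →+* R) (ε₁ ε₂ : ℤ)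
    (hε₁ : ε₁ = 1 ∨ ε₁ = -1) (hε₂ : ε₂ = 1 ∨ ε₂ = -1)
    (hψX : ψ X = ε₁ • (1 : R)) (hψY : ψ Y = ε₂ • (1 : R)) :
    m = k ∧ l = n ∧ ε₁ * ε₂ = -1 ∧ (l = k + 1 ∨ k = l + 1) :=
  rank_three_trivial_image_general R X Y B k l m n hX2 hY2 hXY ψ ε₁ ε₂ hε₁ hε₂ hψX hψY
end
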